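/- For every ε > 0 and every ℓ ∈ ℕ there is n = n(ε, ℓ) ∈ ℕ with the following property: if m ≥ n and (x_i)_{i=1}^m is a normalized block sequence of (e_i) such that ‖Σ_{i=1}^m α_i x_i‖ ≥ (1/(1+ε/2)) Σ_{i=1}^m |α_i| for all real scalars (α_i)_{i=1}^m, then y = (1/m) Σ_{i=1}^m x_i satisfies sup{ Σ_{i=1}^ℓ ‖E_i(y)‖ : E₁ < E₂ < ⋯ < E_ℓ finite subsets of ℕ } ≤ ‖y‖ + ε ≤ 1 + ε. -/

import Mathlib

abbrev c00 : Type := ℕ →₀ ℝ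

noncomputable def flog (x : ℝ) : ℝ := Real.logb 2 (x + 1)

noncomputable def supNorm (x : c00) : ℝ := ⨆ i, |x i|

def proj (E : Finset ℕ) (x : c00) : c00 := x.filter (· ∈ E)

def FLt (A B : Finset ℕ) : Prop := ∀ a ∈ A, ∀ b ∈ B, a < b

def IsNormC00 (N : c00 → ℝ) : Prop :=
  (∀ x, N x = 0 ↔ x = 0) ∧ (∀ x y, N (x + y) ≤ N x + N y) ∧
    ∀ (a : ℝ) (x : c00), N (a • x) = |a| * N x

def schSet (N : c00 → ℝ) (x : c00) : Set ℝ :=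
  {s | ∃ n : ℕ, 2 ≤ n ∧ ∃ E : Fin n → Finset ℕ,
    (∀ i j : Fin n, i < j → FLt (E i) (E j)) ∧
    s = (flog n)⁻¹ * ∑ i, N (proj (E i) x)}

def IsSchlumprechtNorm (N : c00 → ℝ) : Prop :=
  IsNormC00 N ∧ ∀ x : c00, IsLUB (insert (supNorm x) (schSet N x)) (N x)

def IsBlockSeq (x : ℕ → c00) : Prop :=
  (∀ n, x n ≠ 0) ∧ ∀ n, ∀ i ∈ (x n).support, ∀ j ∈ (x (n+1)).support, i < j

def SeqEquiv (N : c00 → ℝ) (u v : ℕ → c00) : Prop :=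
  ∃ c : ℝ, 1 ≤ c ∧ ∀ a : ℕ →₀ ℝ,
    (1 / c) * N (a.sum fun i t => t • u i) ≤ N (a.sum fun i t => t • v i) ∧
    N (a.sum fun i t => t • v i) ≤ c * N (a.sum fun i t => t • u i)

/-!
The average `y = m⁻¹ ∑ xⱼ` has norm at most `1` by the triangle inequality and at least
`1 / (1 + ε/2) ≥ 1 - ε/2` by the `ℓ₁` lower estimate. For successive sets `E₁ < ⋯ < E_ℓ`,
`Eᵢ xⱼ ≠ 0 ≠ Eᵢ' xⱼ'` with `i < i'` forces `j ≤ j'`, so at most `m + ℓ` of the numbers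
`‖Eᵢ xⱼ‖ ≤ 1` are nonzero and `∑ᵢ ‖Eᵢ y‖ ≤ 1 + ℓ/m ≤ 1 + ε/2` once `m ≥ 2ℓ/ε`.
-/

open Finset

lemma proj_apply (E : Finset ℕ) (x : c00) (i : ℕ) :
    proj E x i = if i ∈ E then x i else 0 := rfl

lemma proj_smul (E : Finset ℕ) (c : ℝ) (x : c00) : proj E (c • x) = c • proj E x :=
  Finsupp.filter_smul

lemma proj_sum (E : Finset ℕ) (s : Finset ℕ) (f : ℕ → c00) :
    proj E (∑ j ∈ s, f j) = ∑ j ∈ s, proj E (f j) :=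
  Finsupp.filter_sum _ _

lemma proj_proj (F E : Finset ℕ) (x : c00) : proj F (proj E x) = proj (F ∩ E) x := by
  ext i
  simp only [proj_apply, mem_inter]
  split_ifs <;> tauto

lemma exists_mem_support_mem_of_proj_ne_zero {E : Finset ℕ} {x : c00} (h : proj E x ≠ 0) :
    ∃ p ∈ x.support, p ∈ E := by
  obtain ⟨p, hp⟩ := Finsupp.support_nonempty_iff.mpr h
  rw [Finsupp.mem_support_iff, proj_apply] at hp
  split_ifs at hp with hpE
  exacts [⟨p, Finsupp.mem_support_iff.mpr hp, hpE⟩, absurd rfl hp]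

lemma abs_le_supNorm (x : c00) (i : ℕ) : |x i| ≤ supNorm x := by
  refine le_ciSup (f := fun i => |x i|) ⟨∑ j ∈ x.support, |x j|, ?_⟩ i
  rintro _ ⟨k, rfl⟩
  by_cases hk : k ∈ x.support
  · exact single_le_sum (fun j _ => abs_nonneg (x j)) hk
  · show |x k| ≤ _
    rw [Finsupp.notMem_support_iff.mp hk, abs_zero]
    exact sum_nonneg fun j _ => abs_nonneg (x j)

lemma supNorm_proj_le (E : Finset ℕ) (x : c00) : supNorm (proj E x) ≤ supNorm x := by
  refine ciSup_le fun i => ?_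
  rw [proj_apply]
  split_ifs
  · exact abs_le_supNorm x i
  · simpa using (abs_nonneg _).trans (abs_le_supNorm x i)

namespace IsNormC00

variable {N : c00 → ℝ} (hN : IsNormC00 N)
include hN

lemma map_zero : N 0 = 0 := (hN.1 0).2 rfl

lemma sum_le (s : Finset ℕ) (f : ℕ → c00) : N (∑ i ∈ s, f i) ≤ ∑ i ∈ s, N (f i) :=
  le_sum_of_subadditive N hN.map_zero.le hN.2.1 s f

lemma smul_of_nonneg {c : ℝ} (hc : 0 ≤ c) (x : c00) : N (c • x) = c * N x := by
  rw [hN.2.2, abs_of_nonneg hc]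

end IsNormC00

namespace IsSchlumprechtNorm

variable {N : c00 → ℝ} (hN : IsSchlumprechtNorm N)
include hN

lemma supNorm_le (x : c00) : supNorm x ≤ N x := (hN.2 x).1 (Set.mem_insert _ _)

/-- Every admissible family `E₁ < ⋯ < Eₙ` for `E(x)` restricts to the admissible family
`E₁ ∩ E < ⋯ < Eₙ ∩ E` for `x`. -/
lemma proj_le (E : Finset ℕ) (x : c00) : N (proj E x) ≤ N x := by
  refine (hN.2 (proj E x)).2 fun s hs => ?_
  rcases Set.mem_insert_iff.mp hs with rfl | ⟨n, hn, F, hF, rfl⟩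
  · exact (supNorm_proj_le E x).trans (hN.supNorm_le x)
  · refine (hN.2 x).1 (Set.mem_insert_of_mem _ ⟨n, hn, fun i => F i ∩ E, ?_, ?_⟩)
    · exact fun i j hij a ha b hb => hF i j hij a (mem_of_mem_inter_left ha) b
        (mem_of_mem_inter_left hb)
    · simp only [proj_proj]

end IsSchlumprechtNorm

lemma support_lt_of_lt {m : ℕ} {x : ℕ → c00} (hx : ∀ i < m, x i ≠ 0)
    (hb : ∀ i, i + 1 < m → ∀ a ∈ (x i).support, ∀ b ∈ (x (i + 1)).support, a < b)
    {j j' : ℕ} (hjj' : j < j') (hj' : j' < m) :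
    ∀ a ∈ (x j).support, ∀ b ∈ (x j').support, a < b := by
  induction j', hjj' using Nat.le_induction with
  | base => exact hb j hj'
  | succ k hjk ih =>
    intro a ha b hb'
    obtain ⟨c, hc⟩ := Finsupp.support_nonempty_iff.mpr (hx k (by omega))
    exact (ih (by omega) a ha c hc).trans (hb k hj' c hc b hb')

/-- Removing its largest element from each `T i` leaves pairwise disjoint sets, because
every other element of `T i` lies strictly below an element of `T i`, hence below `T i'`
for `i < i'`. -/
lemma sum_card_le_card_biUnion_add {α ι : Type*} [LinearOrder α] [LinearOrder ι] [Fintype ι]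
    (T : ι → Finset α) (hT : ∀ i i', i < i' → ∀ a ∈ T i, ∀ b ∈ T i', a ≤ b) :
    ∑ i, #(T i) ≤ #(univ.biUnion T) + Fintype.card ι := by
  classical
  set S : ι → Finset α := fun i => (T i).filter fun a => ∃ b ∈ T i, a < b
  have hcard (i : ι) : #(T i) ≤ #(S i) + 1 := by
    simp only [S]
    have htop : #((T i).filter fun a => ¬∃ b ∈ T i, a < b) ≤ 1 := by
      refine card_le_one.mpr fun a ha b hb => ?_
      simp only [mem_filter, not_exists, not_and, not_lt] at ha hb
      exact le_antisymm (hb.2 a ha.1) (ha.2 b hb.1)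
    have := card_filter_add_card_filter_not (s := T i) fun a => ∃ b ∈ T i, a < b
    omega
  have hdisj : ((univ : Finset ι) : Set ι).PairwiseDisjoint S := by
    intro i _ i' _ hne
    refine disjoint_left.mpr fun a ha ha' => ?_
    obtain ⟨haT, b, hb, hab⟩ := mem_filter.mp ha
    obtain ⟨haT', b', hb', hab'⟩ := mem_filter.mp ha'
    rcases lt_or_gt_of_ne hne with h | h
    · exact (hT i i' h b hb a haT').not_gt hab
    · exact (hT i' i h b' hb' a haT).not_gt hab'
  have hsub : univ.biUnion S ⊆ univ.biUnion T :=
    biUnion_mono fun i _ => filter_subset _ _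
  calc ∑ i, #(T i) ≤ ∑ i, (#(S i) + 1) := sum_le_sum fun i _ => hcard i
    _ = #(univ.biUnion S) + Fintype.card ι := by
        rw [sum_add_distrib, card_biUnion hdisj, sum_const, smul_eq_mul,
          mul_one, card_univ]
    _ ≤ #(univ.biUnion T) + Fintype.card ι := by grw [card_le_card hsub]

lemma sum_norm_proj_sum_le {N : c00 → ℝ} (hN : IsSchlumprechtNorm N) {m : ℕ} {x : ℕ → c00}
    (hx : ∀ i < m, N (x i) = 1)
    (hb : ∀ i, i + 1 < m → ∀ a ∈ (x i).support, ∀ b ∈ (x (i + 1)).support, a < b)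
    {l : ℕ} (E : Fin l → Finset ℕ) (hE : ∀ i j : Fin l, i < j → FLt (E i) (E j)) :
    ∑ i, N (proj (E i) (∑ j ∈ range m, x j)) ≤ m + l := by
  classical
  set T : Fin l → Finset ℕ := fun i => (range m).filter fun j => proj (E i) (x j) ≠ 0
  have hx0 (i : ℕ) (hi : i < m) : x i ≠ 0 := by
    intro h
    simpa [h, hN.1.map_zero] using hx i hi
  have hnorm (i : Fin l) : N (proj (E i) (∑ j ∈ range m, x j)) ≤ #(T i) := by
    calc N (proj (E i) (∑ j ∈ range m, x j))
        = N (∑ j ∈ T i, proj (E i) (x j)) := by rw [proj_sum, sum_filter_ne_zero]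
      _ ≤ ∑ j ∈ T i, N (proj (E i) (x j)) := hN.1.sum_le _ _
      _ ≤ ∑ j ∈ T i, 1 := sum_le_sum fun j hj =>
          (hN.proj_le _ _).trans (hx j (mem_range.mp (mem_filter.mp hj).1)).le
      _ = #(T i) := by simp
  have hord (i i' : Fin l) (hii' : i < i') : ∀ j ∈ T i, ∀ j' ∈ T i', j ≤ j' := by
    intro j hj j' hj'
    obtain ⟨hjm, hj0⟩ := mem_filter.mp hj
    obtain ⟨p, hp, hpE⟩ := exists_mem_support_mem_of_proj_ne_zero hj0
    obtain ⟨p', hp', hpE'⟩ := exists_mem_support_mem_of_proj_ne_zero (mem_filter.mp hj').2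
    by_contra! hj'j
    exact (hE i i' hii' p hpE p' hpE').not_gt
      (support_lt_of_lt hx0 hb hj'j (mem_range.mp hjm) p' hp' p hp)
  have hcard : ∑ i, #(T i) ≤ m + l := by
    have hsub : univ.biUnion T ⊆ range m :=
      biUnion_subset.mpr fun i _ => filter_subset _ _
    simpa using (sum_card_le_card_biUnion_add T hord).trans
      (Nat.add_le_add_right (card_le_card hsub) _)
  calc ∑ i, N (proj (E i) (∑ j ∈ range m, x j)) ≤ ∑ i, (#(T i) : ℝ) :=
        sum_le_sum fun i _ => hnorm i
    _ ≤ m + l := by exact_mod_cast hcard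

/-- Lemma 2.3: for every `ε > 0` and `ℓ ∈ ℕ` there is `n` such that
any average `y = (1/m) ∑ᵢ xᵢ` of `m ≥ n` normalized blocks which are
`(1+ε/2)`-equivalent to the `ℓ₁^m` unit basis satisfies
`sup { ∑ᵢ ‖Eᵢ(y)‖ : E₁ < ⋯ < E_ℓ } ≤ ‖y‖ + ε ≤ 1 + ε`. -/
theorem average_lemma
    (N : c00 → ℝ) (hN : IsSchlumprechtNorm N)
    (ε : ℝ) (hε : 0 < ε) (l : ℕ) :
    ∃ n : ℕ, ∀ m : ℕ, n ≤ m → ∀ x : ℕ → c00,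
      (∀ i, i < m → N (x i) = 1) →
      (∀ i, i + 1 < m → ∀ a ∈ (x i).support, ∀ b ∈ (x (i + 1)).support, a < b) →
      (∀ α : ℕ → ℝ, (1 / (1 + ε / 2)) * ∑ i ∈ Finset.range m, |α i| ≤
          N (∑ i ∈ Finset.range m, α i • x i)) →
      (∀ E : Fin l → Finset ℕ, (∀ i j : Fin l, i < j → FLt (E i) (E j)) →
        ∑ i, N (proj (E i) ((m : ℝ)⁻¹ • ∑ i ∈ Finset.range m, x i)) ≤
          N ((m : ℝ)⁻¹ • ∑ i ∈ Finset.range m, x i) + ε) ∧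
      N ((m : ℝ)⁻¹ • ∑ i ∈ Finset.range m, x i) + ε ≤ 1 + ε := by
  refine ⟨⌈2 * l / ε⌉₊ + 1, fun m hm x hx hb hα => ?_⟩
  set S := ∑ i ∈ range m, x i
  have hm0 : (0 : ℝ) < m := by exact_mod_cast (Nat.succ_pos _).trans_le hm
  have hlm : l / m ≤ ε / 2 := by
    have : 2 * l / ε ≤ m := (Nat.le_ceil _).trans (by exact_mod_cast (Nat.le_succ _).trans hm)
    rw [div_le_iff₀ hε] at this
    rw [div_le_iff₀ hm0]
    linarith
  have hy : N ((m : ℝ)⁻¹ • S) = (m : ℝ)⁻¹ * N S := hN.1.smul_of_nonneg (by positivity) S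
  have hy_le : N ((m : ℝ)⁻¹ • S) ≤ 1 := by
    rw [hy, inv_mul_le_one₀ hm0]
    simpa [sum_congr rfl fun i hi => hx i (mem_range.mp hi)] using
      hN.1.sum_le (range m) x
  have hy_ge : 1 / (1 + ε / 2) ≤ N ((m : ℝ)⁻¹ • S) := by
    rw [hy, le_inv_mul_iff₀ hm0, mul_comm]
    simpa [S] using hα fun _ => 1
  refine ⟨fun E hE => ?_, by linarith⟩
  have hε' : 1 - ε / 2 ≤ 1 / (1 + ε / 2) := by
    rw [le_div_iff₀ (by positivity)]
    nlinarith
  calc ∑ i, N (proj (E i) ((m : ℝ)⁻¹ • S)) = (m : ℝ)⁻¹ * ∑ i, N (proj (E i) S) := by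
        simp only [proj_smul, hN.1.smul_of_nonneg (inv_nonneg.mpr hm0.le), mul_sum]
    _ ≤ (m : ℝ)⁻¹ * (m + l) := by gcongr; exact sum_norm_proj_sum_le hN hx hb E hE
    _ = 1 + l / m := by field_simp
    _ ≤ N ((m : ℝ)⁻¹ • S) + ε := by linarith
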